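/- arXiv:2406.13425 — 2 statements merged into one kernel-verified Lean document; each statement's English description precedes it below -/
import Mathlib

section
/- Let X be a random vector in R^d, G : R^d → R^m square integrable, U_r ∈ R^{d×r} and V_s ∈ R^{m×s} matrices with orthonormal columns. Define G*(x) = V_s g*(U_r^T x) + G*_⊥ where g*(x_r) = V_s^T E[G(X) | U_r^T X = x_r] and G*_⊥ = (I_m − V_s V_s^T) E[G(X)]. Then G* minimizes the mean squared error E[‖G(X) − G̃(X)‖²] over all square-integrable functions G̃ of the form G̃(x) = V_s g̃(U_r^T x) + G̃_⊥ with g̃ : R^r → R^s and G̃_⊥ ∈ R^m. -/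
/-!
Put `P = 1 - V Vᵀ`. Since `Vᵀ V = 1`, `P` is the orthogonal projection onto the complement of
the range of `V`, so `‖y‖² = ‖Vᵀ y‖² + ‖P y‖²`. For a reduced model `G̃(x) = V g̃(Uᵀ x) + G̃_⊥`
the mean squared error therefore splits into `E‖Vᵀ G(X) - Vᵀ G̃(X)‖²`, where `Vᵀ G̃(X)` is
`σ(Uᵀ X)`-measurable, and `E‖P G(X) - P G̃_⊥‖²`, where `P G̃(X) = P G̃_⊥` is constant. Each part is
minimized by the corresponding conditional expectation (given `σ(Uᵀ X)`, resp. the trivial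
σ-algebra, i.e. the mean), because `f - E[f | m]` is L²-orthogonal to every `m`-measurable
square-integrable function. These two minimizers are exactly `Vᵀ G*` and `P G*`.
-/

noncomputable section
open MeasureTheory Matrix

def sqn {n : ℕ} (v : Fin n → ℝ) : ℝ := ∑ i, (v i)^2

section Sqn

variable {n k : ℕ}

lemma sq_le_sqn (v : Fin n → ℝ) (i : Fin n) : v i ^ 2 ≤ sqn v :=
  Finset.single_le_sum (f := fun j => v j ^ 2) (fun _ _ => sq_nonneg _) (Finset.mem_univ i)

lemma sqn_eq_dotProduct (v : Fin n → ℝ) : sqn v = v ⬝ᵥ v := by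
  simp [sqn, dotProduct, sq]

lemma sqn_mulVec (A : Matrix (Fin k) (Fin n) ℝ) (v : Fin n → ℝ) :
    sqn (A *ᵥ v) = v ⬝ᵥ ((Aᵀ * A) *ᵥ v) := by
  rw [← mulVec_mulVec, dotProduct_mulVec, vecMul_transpose, sqn_eq_dotProduct]

variable {V : Matrix (Fin n) (Fin k) ℝ}

lemma transpose_mul_mul_transpose_eq (hV : Vᵀ * V = 1) : Vᵀ * (V * Vᵀ) = Vᵀ := by
  rw [← Matrix.mul_assoc, hV, Matrix.one_mul]

lemma transpose_mul_one_sub_mul_transpose (hV : Vᵀ * V = 1) : Vᵀ * (1 - V * Vᵀ) = 0 := by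
  rw [Matrix.mul_sub, Matrix.mul_one, transpose_mul_mul_transpose_eq hV, sub_self]

lemma one_sub_mul_transpose_mul (hV : Vᵀ * V = 1) : (1 - V * Vᵀ) * V = 0 := by
  rw [Matrix.sub_mul, Matrix.one_mul, Matrix.mul_assoc, hV, Matrix.mul_one, sub_self]

lemma one_sub_mul_transpose_mul_mul_transpose (hV : Vᵀ * V = 1) :
    (1 - V * Vᵀ) * (V * Vᵀ) = 0 := by
  rw [← Matrix.mul_assoc, one_sub_mul_transpose_mul hV, Matrix.zero_mul]

lemma one_sub_mul_transpose_mul_self (hV : Vᵀ * V = 1) :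
    (1 - V * Vᵀ) * (1 - V * Vᵀ) = 1 - V * Vᵀ := by
  rw [Matrix.mul_sub, Matrix.mul_one, one_sub_mul_transpose_mul_mul_transpose hV, sub_zero]

lemma sqn_eq_sqn_transpose_mulVec_add (hV : Vᵀ * V = 1) (y : Fin n → ℝ) :
    sqn y = sqn (Vᵀ *ᵥ y) + sqn ((1 - V * Vᵀ) *ᵥ y) := by
  rw [sqn_mulVec, sqn_mulVec, transpose_transpose, transpose_sub, transpose_one, transpose_mul,
    transpose_transpose, one_sub_mul_transpose_mul_self hV, ← dotProduct_add, ← add_mulVec,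
    add_sub_cancel, one_mulVec, sqn_eq_dotProduct]

lemma transpose_mulVec_sub_mul_transpose_add (hV : Vᵀ * V = 1) (y a b : Fin n → ℝ) :
    Vᵀ *ᵥ (y - ((V * Vᵀ) *ᵥ a + (1 - V * Vᵀ) *ᵥ b)) = Vᵀ *ᵥ (y - a) := by
  rw [mulVec_sub, mulVec_sub, mulVec_add, mulVec_mulVec, mulVec_mulVec,
    transpose_mul_mul_transpose_eq hV, transpose_mul_one_sub_mul_transpose hV, zero_mulVec,
    add_zero]

lemma one_sub_mulVec_sub_mul_transpose_add (hV : Vᵀ * V = 1) (y a b : Fin n → ℝ) :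
    (1 - V * Vᵀ) *ᵥ (y - ((V * Vᵀ) *ᵥ a + (1 - V * Vᵀ) *ᵥ b)) = (1 - V * Vᵀ) *ᵥ (y - b) := by
  rw [mulVec_sub, mulVec_sub, mulVec_add, mulVec_mulVec, mulVec_mulVec,
    one_sub_mul_transpose_mul_mul_transpose hV, one_sub_mul_transpose_mul_self hV, zero_mulVec,
    zero_add]

lemma one_sub_mulVec_mulVec_add (hV : Vᵀ * V = 1) (a : Fin k → ℝ) (b : Fin n → ℝ) :
    (1 - V * Vᵀ) *ᵥ (V *ᵥ a + b) = (1 - V * Vᵀ) *ᵥ b := by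
  rw [mulVec_add, mulVec_mulVec, one_sub_mul_transpose_mul hV, zero_mulVec, zero_add]

end Sqn

section CondExp

variable {Ω : Type*} {m m₀ : MeasurableSpace Ω} {μ : Measure Ω} {n k : ℕ}

lemma memLp_two_of_integrable_sqn {F : Ω → Fin n → ℝ} (hF : AEStronglyMeasurable F μ)
    (hsqn : Integrable (fun ω => sqn (F ω)) μ) : MemLp F 2 μ := by
  refine memLp_pi_iff.2 fun i => ?_
  have hFi : AEStronglyMeasurable (F · i) μ := (continuous_apply i).comp_aestronglyMeasurable hF
  refine (memLp_two_iff_integrable_sq hFi).2 <| hsqn.mono' (hFi.pow 2) ?_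
  filter_upwards with ω
  rw [Real.norm_of_nonneg (sq_nonneg _)]
  exact sq_le_sqn _ i

lemma MeasureTheory.MemLp.integrable_sqn {F : Ω → Fin n → ℝ} (hF : MemLp F 2 μ) :
    Integrable (fun ω => sqn (F ω)) μ :=
  integrable_finsetSum _ fun i _ => (memLp_pi_iff.1 hF i).integrable_sq

lemma MeasureTheory.MemLp.integral_sqn {F : Ω → Fin n → ℝ} (hF : MemLp F 2 μ) :
    ∫ ω, sqn (F ω) ∂μ = ∑ i, ∫ ω, F ω i ^ 2 ∂μ :=
  integral_finsetSum _ fun i _ => (memLp_pi_iff.1 hF i).integrable_sq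

lemma MeasureTheory.MemLp.mulVec {p : ENNReal} {F : Ω → Fin n → ℝ} (hF : MemLp F p μ)
    (A : Matrix (Fin k) (Fin n) ℝ) : MemLp (fun ω => A *ᵥ F ω) p μ :=
  hF.continuousLinearMap_comp (mulVecLin A).toContinuousLinearMap

lemma mulVec_condExp {F : Ω → Fin n → ℝ} (hF : Integrable F μ) (A : Matrix (Fin k) (Fin n) ℝ) :
    (fun ω => A *ᵥ (μ[F|m]) ω) =ᵐ[μ] μ[fun ω => A *ᵥ F ω|m] :=
  (mulVecLin A).toContinuousLinearMap.comp_condExp_comm hF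

lemma integral_sqn_eq_integral_sqn_transpose_mulVec_add {V : Matrix (Fin n) (Fin k) ℝ}
    (hV : Vᵀ * V = 1) {F : Ω → Fin n → ℝ} (hF : MemLp F 2 μ) :
    ∫ ω, sqn (F ω) ∂μ = ∫ ω, sqn (Vᵀ *ᵥ F ω) ∂μ + ∫ ω, sqn ((1 - V * Vᵀ) *ᵥ F ω) ∂μ := by
  rw [← integral_add (hF.mulVec _).integrable_sqn (hF.mulVec _).integrable_sqn]
  simp only [← sqn_eq_sqn_transpose_mulVec_add hV]

lemma integral_mul_condExp (hm : m ≤ m₀) [SigmaFinite (μ.trim hm)] {f h : Ω → ℝ}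
    (hh : StronglyMeasurable[m] h) (hf : Integrable f μ) (hhf : Integrable (h * f) μ) :
    ∫ ω, h ω * (μ[f|m]) ω ∂μ = ∫ ω, h ω * f ω ∂μ :=
  (integral_congr_ae (condExp_mul_of_stronglyMeasurable_left hh hhf hf).symm).trans
    (integral_condExp hm)

variable [IsFiniteMeasure μ]

lemma integral_sq_sub_eq_add_of_condExp (hm : m ≤ m₀) {f g : Ω → ℝ} (hf : MemLp f 2 μ)
    (hg : MemLp g 2 μ) (hgm : StronglyMeasurable[m] g) :
    ∫ ω, (f ω - g ω) ^ 2 ∂μ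
      = ∫ ω, (f ω - (μ[f|m]) ω) ^ 2 ∂μ + ∫ ω, ((μ[f|m]) ω - g ω) ^ 2 ∂μ := by
  set c := μ[f|m]
  set h := c - g
  have hc : MemLp c 2 μ := hf.condExp one_le_two
  have hh : MemLp h 2 μ := hc.sub hg
  have hcross : ∫ ω, h ω * f ω ∂μ = ∫ ω, h ω * c ω ∂μ :=
    (integral_mul_condExp hm (stronglyMeasurable_condExp.sub hgm) (hf.integrable one_le_two)
      (hh.integrable_mul hf)).symm
  have i1 : Integrable (fun ω => (f ω - c ω) ^ 2) μ := (hf.sub hc).integrable_sq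
  have i2 : Integrable (fun ω => h ω ^ 2) μ := hh.integrable_sq
  have i3 : Integrable (fun ω => h ω * f ω) μ := hh.integrable_mul hf
  have i4 : Integrable (fun ω => h ω * c ω) μ := hh.integrable_mul hc
  have i12 : Integrable (fun ω => (f ω - c ω) ^ 2 + h ω ^ 2) μ := i1.add i2
  have i34 : Integrable (fun ω => 2 * (h ω * f ω - h ω * c ω)) μ := (i3.sub i4).const_mul 2
  calc ∫ ω, (f ω - g ω) ^ 2 ∂μ
      = ∫ ω, ((f ω - c ω) ^ 2 + h ω ^ 2 + 2 * (h ω * f ω - h ω * c ω)) ∂μ := by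
        congr 1 with ω
        simp only [h, Pi.sub_apply]
        ring
    _ = ∫ ω, (f ω - c ω) ^ 2 ∂μ + ∫ ω, h ω ^ 2 ∂μ
          + 2 * (∫ ω, h ω * f ω ∂μ - ∫ ω, h ω * c ω ∂μ) := by
        rw [integral_add i12 i34, integral_add i1 i2, integral_const_mul, integral_sub i3 i4]
    _ = ∫ ω, (f ω - c ω) ^ 2 ∂μ + ∫ ω, (c ω - g ω) ^ 2 ∂μ := by
        rw [hcross, sub_self, mul_zero, add_zero]
        rfl

lemma integral_sq_sub_condExp_le (hm : m ≤ m₀) {f g : Ω → ℝ} (hf : MemLp f 2 μ)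
    (hg : MemLp g 2 μ) (hgm : StronglyMeasurable[m] g) :
    ∫ ω, (f ω - (μ[f|m]) ω) ^ 2 ∂μ ≤ ∫ ω, (f ω - g ω) ^ 2 ∂μ := by
  rw [integral_sq_sub_eq_add_of_condExp hm hf hg hgm]
  exact le_add_of_nonneg_right (integral_nonneg fun ω => sq_nonneg _)

lemma integral_sqn_sub_condExp_le (hm : m ≤ m₀) {F g : Ω → Fin n → ℝ}
    (hF : MemLp F 2 μ) (hg : MemLp g 2 μ) (hgm : StronglyMeasurable[m] g) :
    ∫ ω, sqn (F ω - (μ[F|m]) ω) ∂μ ≤ ∫ ω, sqn (F ω - g ω) ∂μ := by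
  rw [MemLp.integral_sqn (F := fun ω => F ω - (μ[F|m]) ω) (hF.sub (hF.condExp one_le_two)),
    MemLp.integral_sqn (F := fun ω => F ω - g ω) (hF.sub hg)]
  refine Finset.sum_le_sum fun i _ => ?_
  have hcomp : (fun ω => (μ[F|m]) ω i) =ᵐ[μ] μ[(F · i)|m] :=
    (ContinuousLinearMap.proj i).comp_condExp_comm (hF.integrable one_le_two)
  calc ∫ ω, (F - μ[F|m]) ω i ^ 2 ∂μ = ∫ ω, (F ω i - (μ[(F · i)|m]) ω) ^ 2 ∂μ := by
        refine integral_congr_ae ?_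
        filter_upwards [hcomp] with ω hω
        simp [hω]
    _ ≤ ∫ ω, (F ω i - g ω i) ^ 2 ∂μ :=
        integral_sq_sub_condExp_le hm (memLp_pi_iff.1 hF i) (memLp_pi_iff.1 hg i)
          ((continuous_apply i).comp_stronglyMeasurable hgm)

lemma integral_sqn_mulVec_sub_condExp_le (hm : m ≤ m₀) (A : Matrix (Fin k) (Fin n) ℝ)
    {F g : Ω → Fin n → ℝ} (hF : MemLp F 2 μ) (hg : MemLp g 2 μ)
    (hgm : StronglyMeasurable[m] fun ω => A *ᵥ g ω) :
    ∫ ω, sqn (A *ᵥ (F ω - (μ[F|m]) ω)) ∂μ ≤ ∫ ω, sqn (A *ᵥ (F ω - g ω)) ∂μ := by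
  simp only [mulVec_sub]
  calc ∫ ω, sqn (A *ᵥ F ω - A *ᵥ (μ[F|m]) ω) ∂μ
      = ∫ ω, sqn (A *ᵥ F ω - (μ[fun ω => A *ᵥ F ω|m]) ω) ∂μ := by
        refine integral_congr_ae ?_
        filter_upwards [mulVec_condExp (hF.integrable one_le_two) A] with ω hω
        rw [hω]
    _ ≤ _ := integral_sqn_sub_condExp_le hm (hF.mulVec A) (hg.mulVec A) hgm

lemma integral_sqn_sub_mulVec_condExp_add_le {m₁ m₂ : MeasurableSpace Ω} (hm₁ : m₁ ≤ m₀)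
    (hm₂ : m₂ ≤ m₀) {V : Matrix (Fin n) (Fin k) ℝ} (hV : Vᵀ * V = 1)
    {F g : Ω → Fin n → ℝ} (hF : MemLp F 2 μ) (hg : MemLp g 2 μ)
    (hg₁ : StronglyMeasurable[m₁] fun ω => Vᵀ *ᵥ g ω)
    (hg₂ : StronglyMeasurable[m₂] fun ω => (1 - V * Vᵀ) *ᵥ g ω) :
    ∫ ω, sqn (F ω - ((V * Vᵀ) *ᵥ (μ[F|m₁]) ω + (1 - V * Vᵀ) *ᵥ (μ[F|m₂]) ω)) ∂μ
      ≤ ∫ ω, sqn (F ω - g ω) ∂μ := by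
  have hbest : MemLp (fun ω => (V * Vᵀ) *ᵥ (μ[F|m₁]) ω + (1 - V * Vᵀ) *ᵥ (μ[F|m₂]) ω) 2 μ :=
    ((hF.condExp one_le_two).mulVec _).add ((hF.condExp one_le_two).mulVec _)
  rw [integral_sqn_eq_integral_sqn_transpose_mulVec_add (F := fun ω => F ω - _) hV
      (hF.sub hbest),
    integral_sqn_eq_integral_sqn_transpose_mulVec_add (F := fun ω => F ω - g ω) hV (hF.sub hg)]
  simp only [transpose_mulVec_sub_mul_transpose_add hV, one_sub_mulVec_sub_mul_transpose_add hV]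
  exact add_le_add (integral_sqn_mulVec_sub_condExp_le hm₁ _ hF hg hg₁)
    (integral_sqn_mulVec_sub_condExp_le hm₂ _ hF hg hg₂)

end CondExp

theorem optimal_reduced_model_general
    {d m r s : ℕ} {Ω : Type*} [MeasurableSpace Ω] (μ : Measure Ω) [IsProbabilityMeasure μ]
    (X : Ω → (Fin d → ℝ)) (hX : Measurable X)
    (G : (Fin d → ℝ) → (Fin m → ℝ)) (hGmeas : Measurable G)
    (hGL2 : Integrable (fun ω => sqn (G (X ω))) μ)
    (U : Matrix (Fin d) (Fin r) ℝ)
    (V : Matrix (Fin m) (Fin s) ℝ) (hV : Vᵀ * V = 1)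
    -- the optimal reduced model G*
    (Gstar : Ω → (Fin m → ℝ))
    (hGstar : Gstar = fun ω =>
      (V * Vᵀ).mulVec
        ((μ[(fun ω' => G (X ω')) | MeasurableSpace.comap (fun ω' => Uᵀ.mulVec (X ω')) inferInstance]) ω)
      + ((1 : Matrix (Fin m) (Fin m) ℝ) - V * Vᵀ).mulVec (∫ ω', G (X ω') ∂μ)) :
    -- G* minimizes the L² error among all reduced models of the prescribed form
    ∀ (gt : (Fin r → ℝ) → (Fin s → ℝ)) (Gperp : Fin m → ℝ),
      Measurable gt →
      Integrable (fun ω => sqn (G (X ω) - (V.mulVec (gt (Uᵀ.mulVec (X ω))) + Gperp))) μ →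
      ∫ ω, sqn (G (X ω) - Gstar ω) ∂μ
        ≤ ∫ ω, sqn (G (X ω) - (V.mulVec (gt (Uᵀ.mulVec (X ω))) + Gperp)) ∂μ := by
  intro gt Gperp hgt hint
  have hZ : Measurable fun ω => Uᵀ *ᵥ X ω := by fun_prop
  have hGX : MemLp (fun ω => G (X ω)) 2 μ :=
    memLp_two_of_integrable_sqn (hGmeas.comp hX).aestronglyMeasurable hGL2
  have hmodel : MemLp (fun ω => V *ᵥ gt (Uᵀ *ᵥ X ω) + Gperp) 2 μ := by
    have hres := memLp_two_of_integrable_sqn (by fun_prop :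
      Measurable fun ω => G (X ω) - (V *ᵥ gt (Uᵀ *ᵥ X ω) + Gperp)).aestronglyMeasurable hint
    rw [← sub_sub_cancel (fun ω => G (X ω)) fun ω => V *ᵥ gt (Uᵀ *ᵥ X ω) + Gperp]
    exact hGX.sub hres
  have hrange : StronglyMeasurable[MeasurableSpace.comap (fun ω => Uᵀ *ᵥ X ω) inferInstance]
      fun ω => Vᵀ *ᵥ (V *ᵥ gt (Uᵀ *ᵥ X ω) + Gperp) :=
    ((by fun_prop : Measurable fun z => Vᵀ *ᵥ (V *ᵥ gt z + Gperp)).comp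
      (comap_measurable _)).stronglyMeasurable
  have hkernel : StronglyMeasurable[⊥]
      fun ω => (1 - V * Vᵀ) *ᵥ (V *ᵥ gt (Uᵀ *ᵥ X ω) + Gperp) := by
    simp only [one_sub_mulVec_mulVec_add hV]
    exact stronglyMeasurable_const
  subst hGstar
  simpa only [condExp_bot] using
    integral_sqn_sub_mulVec_condExp_add_le hZ.comap_le bot_le hV hGX hmodel hrange hkernel

/-- `G*(x) = V_s g*(U_rᵀ x) + G*_⊥`, with `g*` built from the conditional
expectation of `G(X)` given `U_rᵀ X` and `G*_⊥ = (I - V Vᵀ) E[G(X)]`, minimizes the mean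
squared error over all square-integrable reduced models `G̃(x) = V_s g̃(U_rᵀ x) + G̃_⊥`. -/
theorem optimal_reduced_model
    {d m r s : ℕ} {Ω : Type*} [MeasurableSpace Ω] (μ : Measure Ω) [IsProbabilityMeasure μ]
    (X : Ω → (Fin d → ℝ)) (hX : Measurable X)
    (G : (Fin d → ℝ) → (Fin m → ℝ)) (hGmeas : Measurable G)
    (hGL2 : Integrable (fun ω => sqn (G (X ω))) μ)
    (U : Matrix (Fin d) (Fin r) ℝ) (hU : Uᵀ * U = 1)
    (V : Matrix (Fin m) (Fin s) ℝ) (hV : Vᵀ * V = 1)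
    -- the optimal reduced model G*
    (Gstar : Ω → (Fin m → ℝ))
    (hGstar : Gstar = fun ω =>
      (V * Vᵀ).mulVec
        ((μ[(fun ω' => G (X ω')) | MeasurableSpace.comap (fun ω' => Uᵀ.mulVec (X ω')) inferInstance]) ω)
      + ((1 : Matrix (Fin m) (Fin m) ℝ) - V * Vᵀ).mulVec (∫ ω', G (X ω') ∂μ)) :
    -- G* minimizes the L² error among all reduced models of the prescribed form
    ∀ (gt : (Fin r → ℝ) → (Fin s → ℝ)) (Gperp : Fin m → ℝ),
      Measurable gt →
      Integrable (fun ω => sqn (G (X ω) - (V.mulVec (gt (Uᵀ.mulVec (X ω))) + Gperp))) μ →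
      ∫ ω, sqn (G (X ω) - Gstar ω) ∂μ
        ≤ ∫ ω, sqn (G (X ω) - (V.mulVec (gt (Uᵀ.mulVec (X ω))) + Gperp)) ∂μ :=
  optimal_reduced_model_general μ X hX G hGmeas hGL2 U V hV Gstar hGstar
end
end

section
/- Let X be a random vector on R^d satisfying the Poincaré inequality with constant C(X): Var(f(X)) ≤ C(X) E[‖∇f(X)‖²] for all continuously differentiable f. Let G : R^d → R^m be continuously differentiable with E[‖∇G(X)‖_F²] < ∞, and let V_s ∈ R^{m×s}, V_⊥ ∈ R^{m×(m−s)} be orthogonal complements with orthonormal columns. Then E[‖V_⊥ V_⊥^T(G(X) − E[G(X)])‖²] ≤ C(X)(E[‖∇G(X)‖_F²] − E[‖V_s^T ∇G(X)‖_F²]). -/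
/-!
Each coordinate `fᵢ = (V_⊥ V_⊥ᵀ G)ᵢ` has as gradient the `i`-th row of `V_⊥ V_⊥ᵀ ∇G`, so the
Poincaré inequality bounds its variance by `C · E‖(V_⊥ V_⊥ᵀ ∇G)ᵢ‖²`. Summing over `i` gives
`C · E‖V_⊥ V_⊥ᵀ ∇G‖_F²`, and since `V_⊥ V_⊥ᵀ = I - V_s V_sᵀ` is an idempotent symmetric
matrix, `‖V_⊥ V_⊥ᵀ A‖_F² = ‖A‖_F² - ‖V_sᵀ A‖_F²`. Measurability of `G` comes from its continuity,
which follows from the continuity of its partial derivatives by the mean value inequality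
applied one coordinate at a time.
-/

noncomputable section
open MeasureTheory Matrix

def frobSq {m n : ℕ} (A : Matrix (Fin m) (Fin n) ℝ) : ℝ := ∑ i, ∑ j, (A i j)^2

section PartialDerivs

open Set Function

variable {ι F : Type*} [DecidableEq ι] [NormedAddCommGroup F] [NormedSpace ℝ F]

def HasPartialDerivs (g : (ι → ℝ) → F) (p : (ι → ℝ) → ι → F) : Prop :=
  ∀ x j, HasDerivAt (fun t : ℝ => g (x + t • Pi.single j (1 : ℝ))) (p x j) 0

variable {g : (ι → ℝ) → F} {p : (ι → ℝ) → ι → F}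

lemma update_eq_add_smul_single (x : ι → ℝ) (j : ι) (t : ℝ) :
    update x j t = x + (t - x j) • Pi.single j (1 : ℝ) := by
  ext i
  rcases eq_or_ne i j with rfl | hij <;> simp [*]

lemma HasPartialDerivs.hasDerivAt_update (hg : HasPartialDerivs g p) (x : ι → ℝ) (j : ι)
    (t : ℝ) : HasDerivAt (fun s => g (update x j s)) (p (update x j t) j) t := by
  have := HasDerivAt.comp_sub_const t t (by rw [sub_self]; exact hg (update x j t) j)
  convert this using 2 with s
  rw [update_eq_add_smul_single x j t, add_assoc, ← add_smul, update_eq_add_smul_single x j s]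
  congr 3
  ring

lemma HasPartialDerivs.norm_sub_update_le (hg : HasPartialDerivs g p) {M : ℝ} (x : ι → ℝ)
    (j : ι) (a b : ℝ) (hM : ∀ t ∈ uIcc a b, ‖p (update x j t) j‖ ≤ M) :
    ‖g (update x j b) - g (update x j a)‖ ≤ M * |b - a| :=
  Convex.norm_image_sub_le_of_norm_hasDerivWithin_le
    (fun t _ => (hg.hasDerivAt_update x j t).hasDerivWithinAt) hM (convex_uIcc a b)
    left_mem_uIcc right_mem_uIcc

/-- Telescoping over the coordinates of `S`; for the sup metric the ball is a box, so every
intermediate point stays inside it. -/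
lemma HasPartialDerivs.norm_sub_piecewise_le [Fintype ι] (hg : HasPartialDerivs g p)
    {x₀ y : ι → ℝ} {r M : ℝ} (hy : dist y x₀ ≤ r)
    (hM : ∀ z ∈ Metric.closedBall x₀ r, ∀ j, ‖p z j‖ ≤ M)
    (S : Finset ι) : ‖g (S.piecewise y x₀) - g x₀‖ ≤ S.card * M * dist y x₀ := by
  have hr : 0 ≤ r := dist_nonneg.trans hy
  have hbox : ∀ T : Finset ι, T.piecewise y x₀ ∈ Metric.closedBall x₀ r := fun T =>
    (dist_pi_le_iff hr).2 fun i => by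
      by_cases hi : i ∈ T <;> simp [hi, (dist_le_pi_dist y x₀ i).trans hy, hr]
  induction S using Finset.induction_on with
  | empty => simp
  | insert j S hj ih =>
    have hM0 : 0 ≤ M := (norm_nonneg _).trans (hM x₀ (Metric.mem_closedBall_self hr) j)
    have hxj : S.piecewise y x₀ j = x₀ j := Finset.piecewise_eq_of_notMem _ _ _ hj
    have hstep : ‖g ((insert j S).piecewise y x₀) - g (S.piecewise y x₀)‖ ≤ M * dist y x₀ := by
      rw [Finset.piecewise_insert]
      nth_rw 2 [← (update_eq_self_iff (f := S.piecewise y x₀) (a := j)).2 hxj.symm]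
      refine (hg.norm_sub_update_le _ j _ _ fun t ht => hM _ ?_ j).trans ?_
      · refine (dist_pi_le_iff hr).2 fun i => ?_
        rcases eq_or_ne i j with rfl | hij
        · simp only [update_self, Real.dist_eq]
          exact (abs_sub_left_of_mem_uIcc ht).trans ((dist_le_pi_dist y x₀ i).trans hy)
        · simpa [hij] using dist_le_pi_dist _ x₀ i |>.trans (hbox S)
      · exact mul_le_mul_of_nonneg_left (dist_le_pi_dist y x₀ j) hM0
    calc _ ≤ ‖g ((insert j S).piecewise y x₀) - g (S.piecewise y x₀)‖
          + ‖g (S.piecewise y x₀) - g x₀‖ := norm_sub_le_norm_sub_add_norm_sub _ _ _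
      _ ≤ M * dist y x₀ + S.card * M * dist y x₀ := add_le_add hstep ih
      _ = (insert j S).card * M * dist y x₀ := by
        rw [Finset.card_insert_of_notMem hj]; push_cast; ring

lemma HasPartialDerivs.mulVec {m n : Type*} [Fintype m] {G : (ι → ℝ) → m → ℝ}
    {DG : (ι → ℝ) → Matrix m ι ℝ} (hG : ∀ i, HasPartialDerivs (fun x => G x i) (fun x => DG x i))
    (A : Matrix n m ℝ) (i : n) :
    HasPartialDerivs (fun x => (A *ᵥ G x) i) (fun x => (A * DG x) i) := fun x j => by
  simp only [mul_apply]
  exact HasDerivAt.fun_sum fun l _ => (hG l x j).const_mul (A i l)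

theorem HasPartialDerivs.continuous [Fintype ι] (hg : HasPartialDerivs g p)
    (hp : Continuous p) : Continuous g := by
  refine continuous_iff_continuousAt.2 fun x₀ => ?_
  obtain ⟨M, hM⟩ := (isCompact_closedBall x₀ 1).exists_bound_of_continuousOn hp.continuousOn
  refine continuousAt_of_locally_lipschitz one_pos (Fintype.card ι * M) fun y hy => ?_
  have := hg.norm_sub_piecewise_le hy.le
    (fun z hz j => (norm_le_pi_norm (p z) j).trans (hM z hz)) Finset.univ
  rwa [Finset.piecewise_univ, ← dist_eq_norm, Finset.card_univ] at this

theorem continuous_of_hasPartialDerivs_apply [Fintype ι] {κ : Type*} {G : (ι → ℝ) → κ → ℝ}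
    {DG : (ι → ℝ) → Matrix κ ι ℝ} (hG : ∀ i, HasPartialDerivs (fun x => G x i) (fun x => DG x i))
    (hDG : Continuous DG) : Continuous G :=
  continuous_pi fun i => (hG i).continuous ((continuous_apply i).comp hDG)

end PartialDerivs

section SquaredNorms

lemma sq_apply_le_sqn {n : ℕ} (v : Fin n → ℝ) (i : Fin n) : v i ^ 2 ≤ sqn v :=
  Finset.single_le_sum (f := fun j => v j ^ 2) (fun _ _ => sq_nonneg _) (Finset.mem_univ i)

lemma sqn_nonneg {n : ℕ} (v : Fin n → ℝ) : 0 ≤ sqn v :=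
  Finset.sum_nonneg fun _ _ => sq_nonneg _

lemma frobSq_nonneg {m n : ℕ} (A : Matrix (Fin m) (Fin n) ℝ) : 0 ≤ frobSq A :=
  Finset.sum_nonneg fun _ _ => Finset.sum_nonneg fun _ _ => sq_nonneg _

lemma sqn_row_le_frobSq {m n : ℕ} (A : Matrix (Fin m) (Fin n) ℝ) (i : Fin m) :
    sqn (A i) ≤ frobSq A :=
  Finset.single_le_sum (f := fun i => sqn (A i))
    (fun _ _ => sqn_nonneg _) (Finset.mem_univ i)

lemma sqn_mulVec_le {m n : ℕ} (A : Matrix (Fin m) (Fin n) ℝ) (v : Fin n → ℝ) :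
    sqn (A *ᵥ v) ≤ frobSq A * sqn v := by
  rw [frobSq, Finset.sum_mul]
  exact Finset.sum_le_sum fun i _ => Finset.sum_mul_sq_le_sq_mul_sq Finset.univ (A i) v

lemma frobSq_eq_trace {m n : ℕ} (A : Matrix (Fin m) (Fin n) ℝ) :
    frobSq A = trace (Aᵀ * A) := by
  simp only [frobSq, trace, Matrix.diag, mul_apply, transpose_apply, sq]
  exact Finset.sum_comm

lemma frobSq_transpose_mul_add_frobSq_mul {m s k n : ℕ} (V : Matrix (Fin m) (Fin s) ℝ)
    (Q : Matrix (Fin m) (Fin k) ℝ) (hQ : Qᵀ * Q = 1) (hcompl : V * Vᵀ + Q * Qᵀ = 1)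
    (A : Matrix (Fin m) (Fin n) ℝ) : frobSq (Vᵀ * A) + frobSq (Q * Qᵀ * A) = frobSq A := by
  have hidem : (Q * Qᵀ)ᵀ * (Q * Qᵀ) = Q * Qᵀ := by
    rw [transpose_mul, transpose_transpose, Matrix.mul_assoc, ← Matrix.mul_assoc Qᵀ, hQ,
      Matrix.one_mul]
  rw [frobSq_eq_trace, frobSq_eq_trace, frobSq_eq_trace, ← trace_add]
  congr 1
  calc (Vᵀ * A)ᵀ * (Vᵀ * A) + (Q * Qᵀ * A)ᵀ * (Q * Qᵀ * A)
      = Aᵀ * (V * Vᵀ) * A + Aᵀ * ((Q * Qᵀ)ᵀ * (Q * Qᵀ)) * A := by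
        simp only [transpose_mul, transpose_transpose, Matrix.mul_assoc]
    _ = Aᵀ * A := by rw [hidem, ← Matrix.add_mul, ← Matrix.mul_add, hcompl, Matrix.mul_one]

lemma frobSq_transpose_mul_le {m s k n : ℕ} (V : Matrix (Fin m) (Fin s) ℝ)
    (Q : Matrix (Fin m) (Fin k) ℝ) (hQ : Qᵀ * Q = 1) (hcompl : V * Vᵀ + Q * Qᵀ = 1)
    (A : Matrix (Fin m) (Fin n) ℝ) : frobSq (Vᵀ * A) ≤ frobSq A := by
  rw [← frobSq_transpose_mul_add_frobSq_mul V Q hQ hcompl A]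
  exact le_add_of_nonneg_right (frobSq_nonneg _)

@[fun_prop]
lemma continuous_sqn {n : ℕ} : Continuous (sqn (n := n)) := by
  unfold sqn; fun_prop

@[fun_prop]
lemma continuous_frobSq {m n : ℕ} : Continuous (frobSq (m := m) (n := n)) := by
  unfold frobSq; fun_prop

end SquaredNorms

section Poincare

variable {Ω : Type*} [MeasurableSpace Ω] {μ : Measure Ω}

lemma memLp_two_apply_of_integrable_sqn {n : ℕ} {Y : Ω → Fin n → ℝ}
    (hY : AEStronglyMeasurable Y μ) (hY2 : Integrable (fun ω => sqn (Y ω)) μ) (i : Fin n) :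
    MemLp (fun ω => Y ω i) 2 μ := by
  have hYi : AEStronglyMeasurable (fun ω => Y ω i) μ :=
    (continuous_apply i).comp_aestronglyMeasurable hY
  refine (memLp_two_iff_integrable_sq hYi).2 (hY2.mono' (hYi.pow 2) (ae_of_all _ fun ω => ?_))
  rw [Real.norm_of_nonneg (sq_nonneg _)]
  exact sq_apply_le_sqn (Y ω) i

lemma integrable_of_integrable_sqn [IsFiniteMeasure μ] {n : ℕ} {Y : Ω → Fin n → ℝ}
    (hY : AEStronglyMeasurable Y μ) (hY2 : Integrable (fun ω => sqn (Y ω)) μ) : Integrable Y μ :=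
  Integrable.of_eval fun i => (memLp_two_apply_of_integrable_sqn hY hY2 i).integrable one_le_two

lemma integrable_sqn_mulVec {m n : ℕ} {Y : Ω → Fin n → ℝ} (hY : AEStronglyMeasurable Y μ)
    (hY2 : Integrable (fun ω => sqn (Y ω)) μ) (A : Matrix (Fin m) (Fin n) ℝ) :
    Integrable (fun ω => sqn (A *ᵥ Y ω)) μ :=
  (hY2.const_mul (frobSq A)).mono'
    ((continuous_sqn.comp (continuous_const.matrix_mulVec continuous_id)).comp_aestronglyMeasurable
      hY) (ae_of_all _ fun ω => by
        rw [Real.norm_of_nonneg (sqn_nonneg _)]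
        exact sqn_mulVec_le A (Y ω))

lemma integral_mulVec {m n : ℕ} {Y : Ω → Fin n → ℝ} (hY : Integrable Y μ)
    (A : Matrix (Fin m) (Fin n) ℝ) : ∫ ω, A *ᵥ Y ω ∂μ = A *ᵥ ∫ ω, Y ω ∂μ :=
  (LinearMap.toContinuousLinearMap (mulVecLin A)).integral_comp_comm hY

def PoincareInequality {d : ℕ} (μ : Measure Ω) (X : Ω → Fin d → ℝ) (C : ℝ) : Prop :=
  ∀ (f : (Fin d → ℝ) → ℝ) (gradf : (Fin d → ℝ) → Fin d → ℝ), HasPartialDerivs f gradf →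
    Continuous gradf →
    ∫ ω, (f (X ω) - ∫ ω', f (X ω') ∂μ) ^ 2 ∂μ ≤ C * ∫ ω, sqn (gradf (X ω)) ∂μ

theorem PoincareInequality.integral_sqn_sub_integral_le [IsFiniteMeasure μ] {d n : ℕ}
    {X : Ω → Fin d → ℝ} {C : ℝ} (hP : PoincareInequality μ X C) (hX : Measurable X)
    {H : (Fin d → ℝ) → Fin n → ℝ} {DH : (Fin d → ℝ) → Matrix (Fin n) (Fin d) ℝ}
    (hH : ∀ i, HasPartialDerivs (fun x => H x i) (fun x => DH x i)) (hDH : Continuous DH)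
    (hHL2 : Integrable (fun ω => sqn (H (X ω))) μ)
    (hDHL2 : Integrable (fun ω => frobSq (DH (X ω))) μ) :
    ∫ ω, sqn (H (X ω) - ∫ ω', H (X ω') ∂μ) ∂μ ≤ C * ∫ ω, frobSq (DH (X ω)) ∂μ := by
  have hrow : ∀ i, Continuous fun x => DH x i := fun i => (continuous_apply i).comp hDH
  have hHX : ∀ i, MemLp (fun ω => H (X ω) i) 2 μ := memLp_two_apply_of_integrable_sqn
    ((continuous_of_hasPartialDerivs_apply hH hDH).comp_aestronglyMeasurable
      hX.aestronglyMeasurable) hHL2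
  have hmean : ∀ i, (∫ ω', H (X ω') ∂μ) i = ∫ ω', H (X ω') i ∂μ :=
    eval_integral fun i => (hHX i).integrable one_le_two
  have hDHX : ∀ i, Integrable (fun ω => sqn (DH (X ω) i)) μ := fun i =>
    hDHL2.mono'
      ((continuous_sqn.comp (hrow i)).comp_aestronglyMeasurable hX.aestronglyMeasurable)
      (ae_of_all _ fun ω => by
        rw [Real.norm_of_nonneg (sqn_nonneg _)]
        exact sqn_row_le_frobSq _ i)
  calc ∫ ω, sqn (H (X ω) - ∫ ω', H (X ω') ∂μ) ∂μ
      = ∫ ω, ∑ i, (H (X ω) i - ∫ ω', H (X ω') i ∂μ) ^ 2 ∂μ := by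
        simp only [sqn, Pi.sub_apply, hmean]
    _ = ∑ i, ∫ ω, (H (X ω) i - ∫ ω', H (X ω') i ∂μ) ^ 2 ∂μ :=
        integral_finsetSum _ fun i _ => ((hHX i).sub (memLp_const _)).integrable_sq
    _ ≤ ∑ i, C * ∫ ω, sqn (DH (X ω) i) ∂μ :=
        Finset.sum_le_sum fun i _ => hP _ _ (hH i) (hrow i)
    _ = C * ∫ ω, frobSq (DH (X ω)) ∂μ := by
        rw [← Finset.mul_sum, ← integral_finsetSum _ fun i _ => hDHX i]
        rfl

end Poincare

theorem poincare_componentwise_output_bound_general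
    {d m s k : ℕ}
    {Ω : Type*} [MeasurableSpace Ω] (μ : Measure Ω) [IsProbabilityMeasure μ]
    (X : Ω → (Fin d → ℝ)) (hX : Measurable X)
    (C : ℝ)
    -- Poincaré inequality for the law of X with constant C(X)
    (hPoincare : ∀ (f : (Fin d → ℝ) → ℝ) (gradf : (Fin d → ℝ) → (Fin d → ℝ)),
      (∀ x i, HasDerivAt (fun t : ℝ => f (x + t • (Pi.single i (1:ℝ) : Fin d → ℝ)))
        (gradf x i) 0) →
      Continuous gradf →
      ∫ ω, (f (X ω) - ∫ ω', f (X ω') ∂μ)^2 ∂μ ≤ C * ∫ ω, sqn (gradf (X ω)) ∂μ)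
    -- G continuously differentiable with Jacobian DG and E‖∇G(X)‖_F² < ∞
    (G : (Fin d → ℝ) → (Fin m → ℝ)) (DG : (Fin d → ℝ) → Matrix (Fin m) (Fin d) ℝ)
    (hDG : ∀ x i j, HasDerivAt (fun t : ℝ => G (x + t • (Pi.single j (1:ℝ) : Fin d → ℝ)) i)
      (DG x i j) 0)
    (hDGcont : Continuous DG)
    (hGL2 : Integrable (fun ω => sqn (G (X ω))) μ)
    (hDGL2 : Integrable (fun ω => frobSq (DG (X ω))) μ)
    (V : Matrix (Fin m) (Fin s) ℝ)
    (Vp : Matrix (Fin m) (Fin k) ℝ) (hVp : Vpᵀ * Vp = 1)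
    (hcompl : V * Vᵀ + Vp * Vpᵀ = 1) :
    ∫ ω, sqn ((Vp * Vpᵀ).mulVec (G (X ω) - ∫ ω', G (X ω') ∂μ)) ∂μ
      ≤ C * ((∫ ω, frobSq (DG (X ω)) ∂μ) - ∫ ω, frobSq (Vᵀ * DG (X ω)) ∂μ) := by
  set P := Vp * Vpᵀ
  have hGpartial : ∀ i, HasPartialDerivs (fun x => G x i) (fun x => DG x i) :=
    fun i x j => hDG x i j
  have hGX : AEStronglyMeasurable (fun ω => G (X ω)) μ :=
    (continuous_of_hasPartialDerivs_apply hGpartial hDGcont).comp_aestronglyMeasurable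
      hX.aestronglyMeasurable
  have hproj : ∀ A : Matrix (Fin m) (Fin d) ℝ, frobSq (P * A) = frobSq A - frobSq (Vᵀ * A) :=
    fun A => eq_sub_of_add_eq' (frobSq_transpose_mul_add_frobSq_mul V Vp hVp hcompl A)
  have hVDG : Integrable (fun ω => frobSq (Vᵀ * DG (X ω))) μ :=
    hDGL2.mono' (by fun_prop) (ae_of_all _ fun ω => by
      rw [Real.norm_of_nonneg (frobSq_nonneg _)]
      exact frobSq_transpose_mul_le V Vp hVp hcompl _)
  have hPDG : Integrable (fun ω => frobSq (P * DG (X ω))) μ :=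
    (hDGL2.sub hVDG).congr (ae_of_all _ fun ω => (hproj _).symm)
  calc ∫ ω, sqn (P *ᵥ (G (X ω) - ∫ ω', G (X ω') ∂μ)) ∂μ
      = ∫ ω, sqn (P *ᵥ G (X ω) - ∫ ω', P *ᵥ G (X ω') ∂μ) ∂μ := by
        simp only [integral_mulVec (integrable_of_integrable_sqn hGX hGL2), mulVec_sub]
    _ ≤ C * ∫ ω, frobSq (P * DG (X ω)) ∂μ :=
        PoincareInequality.integral_sqn_sub_integral_le hPoincare hX
          (HasPartialDerivs.mulVec hGpartial P) (continuous_const.matrix_mul hDGcont)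
          (integrable_sqn_mulVec hGX hGL2 P) hPDG
    _ = C * ((∫ ω, frobSq (DG (X ω)) ∂μ) - ∫ ω, frobSq (Vᵀ * DG (X ω)) ∂μ) := by
        simp_rw [hproj]
        rw [integral_sub hDGL2 hVDG]

/-- if the law of `X` satisfies a Poincaré inequality with constant `C(X)`,
then for `G` continuously differentiable with square-integrable Jacobian and orthogonal
complements `V_s`, `V_⊥`:
`E‖V_⊥V_⊥ᵀ(G(X) − E G(X))‖² ≤ C(X)(E‖∇G(X)‖_F² − E‖V_sᵀ∇G(X)‖_F²)`. -/
theorem poincare_componentwise_output_bound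
    {d m s k : ℕ} (hk : s + k = m)
    {Ω : Type*} [MeasurableSpace Ω] (μ : Measure Ω) [IsProbabilityMeasure μ]
    (X : Ω → (Fin d → ℝ)) (hX : Measurable X)
    (C : ℝ)
    -- Poincaré inequality for the law of X with constant C(X)
    (hPoincare : ∀ (f : (Fin d → ℝ) → ℝ) (gradf : (Fin d → ℝ) → (Fin d → ℝ)),
      (∀ x i, HasDerivAt (fun t : ℝ => f (x + t • (Pi.single i (1:ℝ) : Fin d → ℝ)))
        (gradf x i) 0) →
      Continuous gradf →
      ∫ ω, (f (X ω) - ∫ ω', f (X ω') ∂μ)^2 ∂μ ≤ C * ∫ ω, sqn (gradf (X ω)) ∂μ)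
    -- G continuously differentiable with Jacobian DG and E‖∇G(X)‖_F² < ∞
    (G : (Fin d → ℝ) → (Fin m → ℝ)) (DG : (Fin d → ℝ) → Matrix (Fin m) (Fin d) ℝ)
    (hDG : ∀ x i j, HasDerivAt (fun t : ℝ => G (x + t • (Pi.single j (1:ℝ) : Fin d → ℝ)) i)
      (DG x i j) 0)
    (hDGcont : Continuous DG)
    (hGL2 : Integrable (fun ω => sqn (G (X ω))) μ)
    (hDGL2 : Integrable (fun ω => frobSq (DG (X ω))) μ)
    (V : Matrix (Fin m) (Fin s) ℝ) (hV : Vᵀ * V = 1)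
    (Vp : Matrix (Fin m) (Fin k) ℝ) (hVp : Vpᵀ * Vp = 1)
    (hcompl : V * Vᵀ + Vp * Vpᵀ = 1) :
    ∫ ω, sqn ((Vp * Vpᵀ).mulVec (G (X ω) - ∫ ω', G (X ω') ∂μ)) ∂μ
      ≤ C * ((∫ ω, frobSq (DG (X ω)) ∂μ) - ∫ ω, frobSq (Vᵀ * DG (X ω)) ∂μ) :=
  poincare_componentwise_output_bound_general μ X hX C hPoincare G DG hDG hDGcont hGL2 hDGL2 V Vp
    hVp hcompl
end
end
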